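/- arXiv:2009.04254 — 2 statements merged into one kernel-verified Lean document; each statement's English description precedes it below -/
import Mathlib

section
/- Let M be a 2n×2n block matrix M = [[A, B],[C, D]] with n×n blocks such that AC = CA. Then det(M) = det(AD - CB). -/
/-!
Left multiplication by `[[1, 0], [-C, A]]` clears the block `C` when `A` and `C` commute, so
`det A * det M = det A * det (A * D - C * B)` over any commutative ring. To cancel `det A`,
replace `A` by `X + A` over `R[X]`: its determinant is a monic characteristic polynomial, hence
regular, and evaluating at `X = 0` gives the identity for `A` itself.
-/

open Polynomial

namespace Matrix

variable {R m : Type*} [CommRing R] [Fintype m] [DecidableEq m]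

theorem det_mul_det_fromBlocks_of_commute (A B C D : Matrix m m R) (h : Commute A C) :
    A.det * (fromBlocks A B C D).det = A.det * (A * D - C * B).det := by
  have hmul : fromBlocks 1 0 (-C) A * fromBlocks A B C D = fromBlocks A B 0 (A * D - C * B) := by
    simp [fromBlocks_multiply, h.eq, sub_eq_neg_add]
  simpa [det_fromBlocks_zero₁₂, det_fromBlocks_zero₂₁] using congrArg det hmul

theorem commute_charmatrix_map_C {A N : Matrix m m R} (h : Commute A N) :
    Commute (charmatrix A) (N.map C) :=
  (scalar_commute X (Commute.all X) _).sub_left (h.map C.mapMatrix)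

theorem charmatrix_map_eval_zero (A : Matrix m m R) :
    (charmatrix A).map (eval 0) = -A := by
  ext i j
  by_cases hij : i = j
  · subst hij; simp
  · simp [charmatrix_apply_ne _ _ _ hij]

theorem det_fromBlocks_of_commute (A B C D : Matrix m m R) (h : Commute A C) :
    (fromBlocks A B C D).det = (A * D - C * B).det := by
  have hreg : IsLeftRegular (charmatrix (-A)).det := (charpoly_monic (-A)).isRegular.left
  have hX := hreg <| det_mul_det_fromBlocks_of_commute (charmatrix (-A)) (B.map Polynomial.C)
    (C.map Polynomial.C) (D.map Polynomial.C) (commute_charmatrix_map_C h.neg_left)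
  have hzero := congrArg (evalRingHom 0) hX
  simp only [RingHom.map_det, RingHom.mapMatrix_apply, map_sub, map_mul, fromBlocks_map] at hzero
  simpa [Matrix.map_map, Function.comp_def, charmatrix_map_eval_zero] using hzero

end Matrix

/-- Block matrix determinant: if `A` and `C` commute, then the determinant of the
2n×2n block matrix `[[A, B], [C, D]]` equals `det (A * D - C * B)`. -/
theorem block_det_of_commute {n : ℕ} {K : Type*} [Field K]
    (A B C D : Matrix (Fin n) (Fin n) K) (h : A * C = C * A) :
    (Matrix.fromBlocks A B C D).det = (A * D - C * B).det :=
  Matrix.det_fromBlocks_of_commute A B C D h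
end

section
/- The characteristic polynomial of the closed-loop mixed traffic matrix Â_S = [[0, M₁],[α₁ I_n - k_s D_S, M₂ - k_v D_S]] satisfies det(λ I_{2n} - Â_S) = ∏_{i=1}^n g_i - ∏_{i=1}^n h_i, where g_i = λ² + (α₂ + k_v δ_i)λ + α₁ - k_s δ_i and h_i = λα₃ + α₁ - k_s δ_i. -/
/-!
Write `P` for the cyclic shift matrix, so that `M₁ = P - 1` and `M₂ = α₃ P - α₂ 1`. The upper-left
block `λ 1` of `λ 1 - Â_S` is scalar, so the Schur complement formula holds without inverting it
(`det = det (λ D - C B)`), and the complement is `diag g - diag h * P`. In the Leibniz expansion of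
this matrix only the identity and the full cycle `P` contribute, giving `∏ g` and, since the
cycle has sign `(-1)^(n-1)`, `-∏ h`.
-/

open Matrix

/-- The circulant matrix `M₁` with `-1` on the diagonal, `1` on the subdiagonal,
and `1` in the top-right `(1,n)` entry (0-indexed: `(0, n-1)`). -/
def M1 (n : ℕ) : Matrix (Fin n) (Fin n) ℂ := fun i j =>
  if i = j then -1
  else if (i : ℕ) = (j : ℕ) + 1 then 1
  else if (i : ℕ) = 0 ∧ (j : ℕ) = n - 1 then 1
  else 0

/-- The circulant matrix `M₂` with `-α₂` on the diagonal, `α₃` on the subdiagonal,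
and `α₃` in the top-right `(1,n)` entry. -/
def M2 (n : ℕ) (α₂ α₃ : ℝ) : Matrix (Fin n) (Fin n) ℂ := fun i j =>
  if i = j then -(α₂ : ℂ)
  else if (i : ℕ) = (j : ℕ) + 1 then (α₃ : ℂ)
  else if (i : ℕ) = 0 ∧ (j : ℕ) = n - 1 then (α₃ : ℂ)
  else 0

/-- The closed-loop mixed traffic matrix
`Â_S = [[0, M₁], [α₁ I - k_s D_S, M₂ - k_v D_S]]` with `D_S = diag(δ)`. -/
def Ahat (n : ℕ) (α₁ α₂ α₃ ks kv : ℝ) (δ : Fin n → ℝ) :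
    Matrix (Fin n ⊕ Fin n) (Fin n ⊕ Fin n) ℂ :=
  Matrix.fromBlocks 0 (M1 n)
    ((α₁ : ℂ) • (1 : Matrix (Fin n) (Fin n) ℂ)
      - (ks : ℂ) • Matrix.diagonal (fun i => (δ i : ℂ)))
    (M2 n α₂ α₃ - (kv : ℂ) • Matrix.diagonal (fun i => (δ i : ℂ)))

open Finset

namespace Equiv.Perm

variable {α : Type*} [Fintype α] [DecidableEq α]

theorem IsCycle.eq_one_or_eq_of_forall_apply_eq_or_eq {σ τ : Perm α} (hτ : τ.IsCycle)
    (hsupp : τ.support = univ) (hσ : ∀ x, σ x = x ∨ σ x = τ x) : σ = 1 ∨ σ = τ := by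
  have hmoved : ∀ x, τ x ≠ x := fun x => mem_support.mp (hsupp ▸ mem_univ x)
  have step : ∀ x, σ x = τ x → σ (τ x) = τ (τ x) := fun x hx =>
    (hσ (τ x)).resolve_left fun hfix => hmoved x (σ.injective (hfix.trans hx.symm))
  by_cases hfix : ∀ x, σ x = x
  · exact .inl (Equiv.ext hfix)
  push Not at hfix
  obtain ⟨a, ha⟩ := hfix
  have hpow : ∀ m : ℕ, σ ((τ ^ m) a) = τ ((τ ^ m) a) := by
    intro m
    induction m with
    | zero => exact (hσ a).resolve_left ha
    | succ m ih => simpa [pow_succ', mul_apply] using step _ ih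
  refine .inr (Equiv.ext fun x => ?_)
  obtain ⟨m, rfl⟩ := hτ.exists_pow_eq (hmoved a) (hmoved x)
  exact hpow m

end Equiv.Perm

namespace Matrix

variable {R n : Type*} [CommRing R] [Fintype n] [DecidableEq n]

theorem det_fromBlocks_smul_one₁₁_of_isRegular {l : R} (hl : IsRegular l)
    (B C D : Matrix n n R) :
    (fromBlocks (l • 1) B C D).det = (l • D - C * B).det := by
  have hmul : fromBlocks (l • 1) B C D * fromBlocks 1 (-B) 0 (l • 1)
      = fromBlocks (l • 1) 0 C (l • D - C * B) := by
    simp [fromBlocks_multiply, sub_eq_add_neg, add_comm]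
  have hdet := congrArg det hmul
  rw [det_mul, det_fromBlocks_zero₂₁, det_fromBlocks_zero₁₂] at hdet
  simp only [det_one, det_smul, one_mul, mul_one] at hdet
  exact (hl.pow _).right.eq_iff.mp (hdet.trans (mul_comm _ _))

theorem det_fromBlocks_smul_one₁₁ (l : R) (B C D : Matrix n n R) :
    (fromBlocks (l • 1) B C D).det = (l • D - C * B).det := by
  -- the generic scalar `X : R[X]` is regular, and the identity specialises along `X ↦ l`
  have hX := det_fromBlocks_smul_one₁₁_of_isRegular Polynomial.isRegular_X
    (B.map Polynomial.C) (C.map Polynomial.C) (D.map Polynomial.C)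
  have := congrArg (Polynomial.evalRingHom l) hX
  rw [RingHom.map_det, RingHom.map_det] at this
  convert this using 2
  · ext (i | i) (j | j) <;> simp [one_apply, apply_ite (Polynomial.eval l)]
  · ext i j
    simp only [sub_apply, smul_apply, smul_eq_mul, mul_apply, RingHom.mapMatrix_apply,
      Polynomial.coe_evalRingHom, map_apply, Polynomial.X_mul_C, Polynomial.eval_sub,
      Polynomial.eval_mul, Polynomial.eval_C, Polynomial.eval_X, Polynomial.eval_finsetSum]
    ring

theorem det_diagonal_sub_diagonal_mul_permMatrix_of_isCycle {τ : Equiv.Perm n}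
    (hτ : τ.IsCycle) (hsupp : τ.support = univ) (g h : n → R) :
    (diagonal g - diagonal h * τ⁻¹.permMatrix R).det = ∏ x, g x - ∏ x, h x := by
  have hmoved : ∀ x, τ x ≠ x := fun x => Equiv.Perm.mem_support.mp (hsupp ▸ mem_univ x)
  set M := diagonal g - diagonal h * τ⁻¹.permMatrix R
  have hM : ∀ y x, M y x = (if y = x then g y else 0) - if y = τ x then h y else 0 := by
    intro y x
    simp [M, diagonal_apply, Equiv.symm_apply_eq]
  have hid : ∏ x, M ((1 : Equiv.Perm n) x) x = ∏ x, g x := by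
    simp [hM, fun x => (hmoved x).symm]
  have hrot : ∏ x, M (τ x) x = (-1) ^ Fintype.card n * ∏ x, h x := by
    simp only [hM, hmoved, if_false, if_true, zero_sub]
    rw [Equiv.prod_comp τ (fun y => -h y), Finset.prod_neg, card_univ]
  have hothers : ∀ σ : Equiv.Perm n, σ ≠ 1 ∧ σ ≠ τ → ∏ x, M (σ x) x = 0 := by
    rintro σ ⟨hσ1, hστ⟩
    obtain ⟨x, hx⟩ : ∃ x, ¬(σ x = x ∨ σ x = τ x) := by
      by_contra! hall
      exact (hτ.eq_one_or_eq_of_forall_apply_eq_or_eq hsupp hall).elim hσ1 hστ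
    push Not at hx
    exact prod_eq_zero (mem_univ x) (by simp [hM, hx.1, hx.2])
  rw [det_apply,
    Fintype.sum_eq_add 1 τ hτ.ne_one.symm fun σ hσ => by rw [hothers σ hσ, smul_zero],
    hid, hrot, hτ.sign, hsupp, card_univ, Equiv.Perm.sign_one, one_smul, Units.smul_def]
  simp [zsmul_eq_mul, ← mul_assoc, ← mul_pow, sub_eq_add_neg]

end Matrix

theorem Fin.eq_finRotate_iff {n : ℕ} {i j : Fin n} :
    i = finRotate n j ↔ (i : ℕ) = j + 1 ∨ (i : ℕ) = 0 ∧ (j : ℕ) = n - 1 := by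
  cases n with
  | zero => exact j.elim0
  | succ n =>
    rw [Fin.ext_iff, coe_finRotate]
    split_ifs with h <;> simp only [Fin.ext_iff, Fin.val_last] at h <;> omega

theorem M2_eq_smul_permMatrix_sub {n : ℕ} (hn : 2 ≤ n) (α₂ α₃ : ℝ) :
    M2 n α₂ α₃ = (α₃ : ℂ) • (finRotate n)⁻¹.permMatrix ℂ - (α₂ : ℂ) • 1 := by
  ext i j
  simp only [M2, Matrix.sub_apply, Matrix.smul_apply, one_apply, PEquiv.toMatrix_apply,
    Equiv.toPEquiv_apply, Option.mem_def, Option.some.injEq, Equiv.Perm.inv_def,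
    Equiv.symm_apply_eq, Fin.eq_finRotate_iff, smul_eq_mul]
  simp only [Fin.ext_iff]
  have hj := j.isLt
  split_ifs <;> first | omega | ring

theorem M1_eq_M2 (n : ℕ) : M1 n = M2 n 1 1 := by
  ext i j
  simp [M1, M2]

theorem charpoly_Ahat_eq_prod_sub_prod_general
    (n : ℕ) (hn : 2 ≤ n) (α₁ α₂ α₃ ks kv : ℝ) (lam : ℂ) (δ : Fin n → ℝ) :
    (lam • (1 : Matrix (Fin n ⊕ Fin n) (Fin n ⊕ Fin n) ℂ)
        - Ahat n α₁ α₂ α₃ ks kv δ).det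
    = (∏ i : Fin n,
        (lam ^ 2 + ((α₂ : ℂ) + (kv : ℂ) * (δ i : ℂ)) * lam + (α₁ : ℂ)
          - (ks : ℂ) * (δ i : ℂ)))
      - (∏ i : Fin n, (lam * (α₃ : ℂ) + (α₁ : ℂ) - (ks : ℂ) * (δ i : ℂ))) := by
  -- an opaque `P` keeps `simp` from expanding the permutation matrix entrywise
  obtain ⟨P, hP⟩ : ∃ P, (finRotate n)⁻¹.permMatrix ℂ = P := ⟨_, rfl⟩
  have hM1 : M1 n = P - 1 := by simp [M1_eq_M2, M2_eq_smul_permMatrix_sub hn, hP]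
  have hM2 : M2 n α₂ α₃ = (α₃ : ℂ) • P - (α₂ : ℂ) • 1 := hP ▸ M2_eq_smul_permMatrix_sub hn α₂ α₃
  have hblocks : lam • 1 - Ahat n α₁ α₂ α₃ ks kv δ
      = fromBlocks (lam • 1) (1 - P)
          (-diagonal fun i => (α₁ : ℂ) - ks * δ i)
          (diagonal (fun i => lam + α₂ + kv * δ i) - (α₃ : ℂ) • P) := by
    rw [Ahat, hM1, hM2, ← fromBlocks_one, fromBlocks_smul, sub_eq_add_neg, fromBlocks_neg,
      fromBlocks_add]
    congr 1 <;> ext i j <;> by_cases hij : i = j <;> simp [hij, one_apply]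
    ring
  have hschur : lam • (diagonal (fun i => lam + α₂ + kv * δ i) - (α₃ : ℂ) • P)
        - (-diagonal fun i => (α₁ : ℂ) - ks * δ i) * (1 - P)
      = diagonal (fun i => lam ^ 2 + (α₂ + kv * δ i) * lam + α₁ - ks * δ i)
        - diagonal (fun i => lam * α₃ + α₁ - ks * δ i) * P := by
    ext i j
    by_cases hij : i = j <;> simp [hij, mul_sub] <;> ring
  rw [hblocks, det_fromBlocks_smul_one₁₁, hschur, ← hP,
    det_diagonal_sub_diagonal_mul_permMatrix_of_isCycle (isCycle_finRotate_of_le hn)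
      (support_finRotate_of_le hn)]

/-- The characteristic polynomial of `Â_S` factors as `∏ g_i - ∏ h_i`, where
`g_i = λ² + (α₂ + k_v δ_i) λ + α₁ - k_s δ_i` and `h_i = λ α₃ + α₁ - k_s δ_i`. -/
theorem charpoly_Ahat_eq_prod_sub_prod
    (n : ℕ) (hn : 2 ≤ n) (α₁ α₂ α₃ ks kv : ℝ) (lam : ℂ) (δ : Fin n → ℝ)
    (hδ : ∀ i, δ i = 0 ∨ δ i = 1) :
    (lam • (1 : Matrix (Fin n ⊕ Fin n) (Fin n ⊕ Fin n) ℂ)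
        - Ahat n α₁ α₂ α₃ ks kv δ).det
    = (∏ i : Fin n,
        (lam ^ 2 + ((α₂ : ℂ) + (kv : ℂ) * (δ i : ℂ)) * lam + (α₁ : ℂ)
          - (ks : ℂ) * (δ i : ℂ)))
      - (∏ i : Fin n, (lam * (α₃ : ℂ) + (α₁ : ℂ) - (ks : ℂ) * (δ i : ℂ))) :=
  charpoly_Ahat_eq_prod_sub_prod_general n hn α₁ α₂ α₃ ks kv lam δ
end
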